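/- In any generalized ear decomposition of a connected graph G, the total number of ears (including bridges) equals |E(G)| - |V(G)| + ψ(G) + 1, where ψ(G) is the number of bridges of G. In particular, this number is independent of the chosen decomposition. -/

import Mathlib

open SimpleGraph Finset MvPolynomial

universe u

variable {V : Type u}

/-- An ear attached to the subgraph `H` of `G`: a nontrivial path (or cycle, if the two
endpoints coincide) between two vertices of `H` all of whose internal vertices and all of
whose edges lie outside `H`. -/
def SimpleGraph.IsEar (G : SimpleGraph V) (H : G.Subgraph) {a b : V} (p : G.Walk a b) : Prop :=
  a ∈ H.verts ∧ b ∈ H.verts ∧ 1 ≤ p.length ∧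
  p.edges.Nodup ∧ p.support.tail.Nodup ∧ (a ≠ b → a ∉ p.support.tail) ∧
  (∀ v ∈ p.support.tail.dropLast, v ∉ H.verts) ∧
  (∀ e ∈ p.edges, e ∉ H.edgeSet)

/-- `G.GEDFrom H₀ H t s e br f` : the subgraph `H` of `G` can be obtained from `H₀` by a
(generalized) ear decomposition consisting of `s` pieces, of which `t` are base pieces
(new cycles or bridges with both endpoints new), `e` are even ears (an initial even cycle
counts as an even ear), and `br` are bridges.  The index `f` records the type of the first
piece: `0` if there is none yet, `1` if it is an odd cycle, `2` if it is an even cycle,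
`3` if it is a bridge. -/
inductive SimpleGraph.GEDFrom (G : SimpleGraph V) (H₀ : G.Subgraph) :
    G.Subgraph → ℕ → ℕ → ℕ → ℕ → ℕ → Prop
  | nil : SimpleGraph.GEDFrom G H₀ H₀ 0 0 0 0 0
  | cycle {H : G.Subgraph} {t s e br f : ℕ} (h : SimpleGraph.GEDFrom G H₀ H t s e br f)
      {a : V} (c : G.Walk a a) (hc : c.IsCycle) (hd : ∀ v ∈ c.support, v ∉ H.verts) :
      SimpleGraph.GEDFrom G H₀ (H ⊔ c.toSubgraph) (t+1) (s+1)
        (e + if Even c.length then 1 else 0) br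
        (if f = 0 then (if Even c.length then 2 else 1) else f)
  | ear {H : G.Subgraph} {t s e br f : ℕ} (h : SimpleGraph.GEDFrom G H₀ H t s e br f)
      {a b : V} (p : G.Walk a b) (hp : G.IsEar H p) :
      SimpleGraph.GEDFrom G H₀ (H ⊔ p.toSubgraph) t (s+1)
        (e + if Even p.length then 1 else 0) br f
  | bridge {H : G.Subgraph} {t s e br f : ℕ} (h : SimpleGraph.GEDFrom G H₀ H t s e br f)
      {a b : V} (hab : G.Adj a b) (hbr : G.IsBridge s(a,b))
      (ha : a ∈ H.verts) (hb : b ∉ H.verts) :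
      SimpleGraph.GEDFrom G H₀ (H ⊔ G.subgraphOfAdj hab) t (s+1) e (br+1)
        (if f = 0 then 3 else f)
  | bridgeBase {H : G.Subgraph} {t s e br f : ℕ} (h : SimpleGraph.GEDFrom G H₀ H t s e br f)
      {a b : V} (hab : G.Adj a b) (hbr : G.IsBridge s(a,b))
      (ha : a ∉ H.verts) (hb : b ∉ H.verts) :
      SimpleGraph.GEDFrom G H₀ (H ⊔ G.subgraphOfAdj hab) (t+1) (s+1) e (br+1)
        (if f = 0 then 3 else f)

/-- A generalized ear decomposition of a subgraph of `G`, starting from scratch. -/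
def SimpleGraph.GED (G : SimpleGraph V) : G.Subgraph → ℕ → ℕ → ℕ → ℕ → ℕ → Prop :=
  SimpleGraph.GEDFrom G ⊥

/-- The number of connected components of `G`. -/
noncomputable def numComponents (G : SimpleGraph V) : ℕ := Nat.card G.ConnectedComponent

/-- `ψ(G)` : the number of bridges of `G`. -/
noncomputable def psi (G : SimpleGraph V) : ℕ := {e : Sym2 V | G.IsBridge e}.ncard

/-- `φ(G)` : the minimum number of even ears in a generalized ear decomposition of `G`
(one base piece per connected component). -/
noncomputable def phi (G : SimpleGraph V) : ℕ :=
  sInf {e | ∃ s br f, G.GED ⊤ (numComponents G) s e br f}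

/-- `φ_odd(G)` : the minimum number of even ears in a generalized ear decomposition of `G`
starting with an odd cycle. -/
noncomputable def phiOdd (G : SimpleGraph V) : ℕ :=
  sInf {e | ∃ s br, G.GED ⊤ 1 s e br 1}

/-- 2-edge-connected: connected and bridgeless. -/
def SimpleGraph.IsTwoEdgeConnected (G : SimpleGraph V) : Prop :=
  G.Connected ∧ ∀ e, ¬ G.IsBridge e

/-- Factor-critical: deleting any vertex leaves a graph with a perfect matching. -/
def SimpleGraph.IsFactorCritical (G : SimpleGraph V) : Prop :=
  ∀ v : V, ∃ M : G.Subgraph, M.IsMatching ∧ M.verts = {v}ᶜ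

/-- Matching-critical: every connected component is factor-critical. -/
def SimpleGraph.IsMatchingCritical (G : SimpleGraph V) : Prop :=
  ∀ v : V, ∃ M : G.Subgraph, M.IsMatching ∧ M.verts = {w | G.Reachable v w} \ {v}

/-- The matching number `ν(G)`. -/
noncomputable def matchNum (G : SimpleGraph V) : ℕ :=
  sSup {n | ∃ M : G.Subgraph, M.IsMatching ∧ M.edgeSet.ncard = n}

/-- Non-bipartite: contains an odd cycle. -/
def SimpleGraph.Nonbipartite (G : SimpleGraph V) : Prop :=
  ∃ (a : V) (c : G.Walk a a), c.IsCycle ∧ Odd c.length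

/-- Every connected component of `G` contains an odd cycle. -/
def allCompsOdd (G : SimpleGraph V) : Prop :=
  ∀ v : V, ∃ (a : V) (c : G.Walk a a), G.Reachable v a ∧ c.IsCycle ∧ Odd c.length

/-- The replication `p_a(G)` of `G` by a vector `a ∈ ℕ^V`: each vertex `v` is replaced by
`a v` mutually non-adjacent copies, copies of adjacent vertices being adjacent. -/
def Replication (G : SimpleGraph V) (a : V → ℕ) : SimpleGraph (Σ v : V, Fin (a v)) where
  Adj x y := G.Adj x.1 y.1
  symm := by constructor; exact fun _ _ h => G.adj_symm h
  loopless := by constructor; exact fun x h => G.irrefl h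

/-- The contraction `G/F` of an edge set `F` of `G`. -/
def contractG (G : SimpleGraph V) (F : Set (Sym2 V)) :
    SimpleGraph (Quot (fun u v : V => s(u,v) ∈ F)) where
  Adj x y := x ≠ y ∧ ∃ u v, G.Adj u v ∧ Quot.mk _ u = x ∧ Quot.mk _ v = y
  symm := by
    constructor
    rintro x y ⟨hxy, u, v, h, hu, hv⟩
    exact ⟨hxy.symm, v, u, h.symm, hv, hu⟩
  loopless := by constructor; exact fun x h => h.1 rfl

/-- The subdivision `G ≻ F` of an edge set `F` of `G`: every non-bridge edge `uv ∈ F` is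
replaced by a path `u-w-v` through a new vertex `w`, and for every bridge `uv ∈ F`
a new vertex `w` and the two edges `uw`, `wv` are added (keeping `uv`). -/
def subdivideG (G : SimpleGraph V) (F : Set (Sym2 V)) :
    SimpleGraph (V ⊕ {e : Sym2 V // e ∈ F}) where
  Adj x y :=
    match x, y with
    | Sum.inl u, Sum.inl v => G.Adj u v ∧ (s(u,v) ∉ F ∨ G.IsBridge s(u,v))
    | Sum.inl u, Sum.inr e => u ∈ e.1
    | Sum.inr e, Sum.inl u => u ∈ e.1
    | Sum.inr _, Sum.inr _ => False
  symm := by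
    constructor
    rintro (u|e) (v|g) h
    · refine ⟨h.1.symm, ?_⟩
      rw [Sym2.eq_swap]
      exact h.2
    · exact h
    · exact h
    · exact h
  loopless := by
    constructor
    rintro (u|e) h
    · exact G.irrefl h.1
    · exact h

/-- The monomial `x_i x_j` associated to an edge `{i,j}`. -/
noncomputable def edgeMonomial (K : Type) [CommRing K] (e : Sym2 V) : MvPolynomial V K :=
  Sym2.lift ⟨fun i j => X i * X j, fun i j => mul_comm _ _⟩ e

/-- The edge ideal `I_G ⊆ K[x_v : v ∈ V]` of the graph `G`. -/
noncomputable def edgeIdeal (K : Type) [CommRing K] (G : SimpleGraph V) :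
    Ideal (MvPolynomial V K) :=
  Ideal.span (edgeMonomial K '' G.edgeSet)

/-- The monomial prime `m^{1_U}` generated by the variables indexed by `U`. -/
noncomputable def vIdeal (K : Type) [CommRing K] (U : Set V) : Ideal (MvPolynomial V K) :=
  Ideal.span ((fun v => (X v : MvPolynomial V K)) '' U)

/-- The maximal homogeneous ideal `(x_v : v ∈ V)`. -/
noncomputable def maxIdeal (K : Type) [CommRing K] : Ideal (MvPolynomial V K) :=
  vIdeal K Set.univ

/-- `Ass(I_G^k)`, the set of associated primes of `R/I_G^k`. -/
noncomputable def AssSet (K : Type) [Field K] (G : SimpleGraph V) (k : ℕ) :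
    Set (Ideal (MvPolynomial V K)) :=
  associatedPrimes (MvPolynomial V K) (MvPolynomial V K ⧸ (edgeIdeal K G ^ k))

/-- `dstab(I_G)`: the least `k` with `m ∈ Ass(I_G^k)`. -/
noncomputable def dstab (K : Type) [Field K] (G : SimpleGraph V) : ℕ :=
  sInf {k | maxIdeal (V := V) K ∈ AssSet K G k}

/-- `astab(I_G)`: the least `k ≥ 1` with `Ass(I_G^k) = Ass(I_G^{k+i})` for all `i ≥ 0`. -/
noncomputable def astab (K : Type) [Field K] (G : SimpleGraph V) : ℕ :=
  sInf {k | 1 ≤ k ∧ ∀ i : ℕ, AssSet K G (k + i) = AssSet K G k}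

/-- The neighbourhood `N(Z)` of a set of vertices. -/
def nbhd (G : SimpleGraph V) (Z : Set V) : Set V := {v | ∃ z ∈ Z, G.Adj v z}

/-- A coclique (independent) set of vertices. -/
def IsCoclique (G : SimpleGraph V) (Z : Set V) : Prop := ∀ u ∈ Z, ∀ w ∈ Z, ¬ G.Adj u w

/-- `D*(U)` : the collection of `U`-dominant* subsets of `U` (empty if `Z = V \ U` is not
independent): `W ⊆ V \ (Z ∪ N(Z))` with either `W = ∅` or `V = N(W) ∪ N(Z) ∪ Z` and every
connected component of the induced subgraph `G_W` containing an odd cycle. -/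
def Dstar (G : SimpleGraph V) (U : Set V) : Set (Set V) :=
  {W | IsCoclique G Uᶜ ∧ W ⊆ U \ nbhd G Uᶜ ∧
    (W = ∅ ∨ ((Set.univ : Set V) = nbhd G W ∪ nbhd G Uᶜ ∪ Uᶜ ∧
      allCompsOdd (G.induce W)))}

/-- `ν*(G_W) = (|W| + φ(G_W) + ψ(G_W) - t_W)/2`, `t_W` the number of components of `G_W`. -/
noncomputable def nustar (G : SimpleGraph V) (W : Set V) : ℕ :=
  (W.ncard + phi (G.induce W) + psi (G.induce W) - numComponents (G.induce W)) / 2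

/-! Every piece of the decomposition changes `|E| - |V|` by a fixed amount: an ear of length `ℓ`
adds `ℓ` edges and `ℓ - 1` new vertices, a pendant bridge one edge and one vertex, a new cycle as
many vertices as edges and a new isolated bridge two vertices and one edge. Hence
`#pieces + |V| = |E| + #bridge pieces + #base pieces`. With a single base piece every
intermediate subgraph is connected, so each ear closes a cycle through it; thus neither ears nor
cycles contain bridges of `G`, and the bridge pieces are exactly the `ψ(G)` bridges of `G`. -/

lemma List.Nodup.ncard_setOf_mem {α : Type*} {l : List α} (hl : l.Nodup) :
    {x | x ∈ l}.ncard = l.length := by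
  classical
  rw [← List.coe_toFinset, Set.ncard_coe_finset, List.toFinset_card_of_nodup hl]

namespace SimpleGraph

variable {G : SimpleGraph V}

lemma Walk.support_tail_eq_dropLast_append {a b : V} (p : G.Walk a b) (hp : ¬ p.Nil) :
    p.support.tail = p.support.tail.dropLast ++ [b] := by
  have hne : p.support.tail ≠ [] := by
    simpa [← List.length_pos_iff, p.length_support] using p.not_nil_iff_lt_length.mp hp
  conv_lhs => rw [← List.dropLast_append_getLast hne, List.getLast_tail, p.getLast_support]

lemma Walk.IsTrail.ncard_edgeSet_toSubgraph {a b : V} {p : G.Walk a b} (hp : p.IsTrail) :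
    p.toSubgraph.edgeSet.ncard = p.length := by
  rw [Walk.edgeSet_toSubgraph, Walk.edgeSet, hp.edges_nodup.ncard_setOf_mem, p.length_edges]

lemma Walk.IsCycle.ncard_verts_toSubgraph {a : V} {c : G.Walk a a} (hc : c.IsCycle) :
    c.toSubgraph.verts.ncard = c.length := by
  have hverts : c.toSubgraph.verts = {v | v ∈ c.support.tail} := by
    ext v
    simp only [Walk.verts_toSubgraph, Set.mem_ofPred_eq, Walk.mem_support_iff]
    exact ⟨fun h => h.elim (· ▸ Walk.end_mem_tail_support hc.not_nil) id, Or.inr⟩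
  rw [hverts, hc.support_nodup.ncard_setOf_mem, List.length_tail, c.length_support]
  rfl

lemma Subgraph.Connected.exists_isPath_toSubgraph_le [DecidableEq V] {H : G.Subgraph}
    (hH : H.Connected) {u v : V} (hu : u ∈ H.verts) (hv : v ∈ H.verts) :
    ∃ q : G.Walk u v, q.IsPath ∧ q.toSubgraph ≤ H := by
  obtain ⟨q, hq⟩ := (H.connected_iff_forall_exists_walk_subgraph.mp hH).2 hu hv
  exact ⟨q.bypass, q.bypass_isPath, Walk.toSubgraph_bypass_le_toSubgraph.trans hq⟩

lemma Subgraph.disjoint_edgeSet_of_disjoint_verts {H K : G.Subgraph}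
    (h : Disjoint H.verts K.verts) : Disjoint H.edgeSet K.edgeSet := by
  refine Set.disjoint_left.mpr fun e he he' => ?_
  induction e using Sym2.ind with
  | h x y =>
    exact Set.disjoint_left.mp h (H.mem_verts_of_mem_edge he (Sym2.mem_mk_left x y))
      (K.mem_verts_of_mem_edge he' (Sym2.mem_mk_left x y))

lemma Subgraph.edgeSet_sup_inter_of_disjoint {H K : G.Subgraph} {B : Set (Sym2 V)}
    (hK : Disjoint K.edgeSet B) : (H ⊔ K).edgeSet ∩ B = H.edgeSet ∩ B := by
  rw [Subgraph.edgeSet_sup, Set.union_inter_distrib_right, hK.inter_eq, Set.union_empty]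

lemma Subgraph.ncard_edgeSet_sup_subgraphOfAdj_inter [Finite V] {H : G.Subgraph} {a b : V}
    (hab : G.Adj a b) (hb : b ∉ H.verts) {B : Set (Sym2 V)} (hB : s(a, b) ∈ B) :
    ((H ⊔ G.subgraphOfAdj hab).edgeSet ∩ B).ncard = (H.edgeSet ∩ B).ncard + 1 := by
  rw [Subgraph.edgeSet_sup, edgeSet_subgraphOfAdj, Set.union_inter_distrib_right,
    Set.singleton_inter_of_mem hB, Set.union_singleton, Set.ncard_insert_of_notMem
      fun h => hb (H.mem_verts_of_mem_edge h.1 (Sym2.mem_mk_right a b))]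

lemma Subgraph.ncard_edgeSet_sup_subgraphOfAdj [Finite V] {H : G.Subgraph} {a b : V}
    (hab : G.Adj a b) (hb : b ∉ H.verts) :
    (H ⊔ G.subgraphOfAdj hab).edgeSet.ncard = H.edgeSet.ncard + 1 := by
  simpa using Subgraph.ncard_edgeSet_sup_subgraphOfAdj_inter hab hb (Set.mem_univ _)

-- `IsBridge s(u, v)` does not ask for `G.Adj u v`: any two mutually unreachable vertices form one.
lemma Connected.setOf_isBridge_subset_edgeSet (hG : G.Connected) :
    {e | G.IsBridge e} ⊆ G.edgeSet := by
  intro e he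
  induction e using Sym2.ind with
  | h u v => exact (IsBridge.reachable_iff_adj he).mp (hG.preconnected u v)

namespace IsEar

variable {H : G.Subgraph} {a b : V} {p : G.Walk a b}

lemma not_nil (hp : G.IsEar H p) : ¬ p.Nil := by
  obtain ⟨-, -, hlen, -⟩ := hp
  rwa [Walk.not_nil_iff_lt_length]

lemma verts_sup (hp : G.IsEar H p) :
    (H ⊔ p.toSubgraph).verts = H.verts ∪ {v | v ∈ p.support.tail.dropLast} := by
  have hmem : ∀ v, v ∈ p.support ↔ v = a ∨ v ∈ p.support.tail.dropLast ∨ v = b := by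
    intro v
    conv_lhs => rw [Walk.mem_support_iff, p.support_tail_eq_dropLast_append hp.not_nil]
    simp
  obtain ⟨ha, hb, -⟩ := hp
  ext v
  simp only [Subgraph.verts_sup, Walk.verts_toSubgraph, Set.mem_union, Set.mem_ofPred_eq, hmem]
  constructor
  · rintro (hv | rfl | hv | rfl) <;> simp [*]
  · tauto

lemma ncard_verts_sup [Finite V] (hp : G.IsEar H p) :
    (H ⊔ p.toSubgraph).verts.ncard = H.verts.ncard + (p.length - 1) := by
  have hsup := hp.verts_sup
  obtain ⟨-, -, -, -, htail, -, hinner, -⟩ := hp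
  rw [hsup, Set.ncard_union_eq ?_, (htail.sublist (List.dropLast_sublist _)).ncard_setOf_mem,
    List.length_dropLast, List.length_tail, p.length_support]
  · rfl
  · exact Set.disjoint_right.mpr hinner

lemma ncard_edgeSet_sup [Finite V] (hp : G.IsEar H p) :
    (H ⊔ p.toSubgraph).edgeSet.ncard = H.edgeSet.ncard + p.length := by
  obtain ⟨-, -, -, hedges, -, -, -, hnew⟩ := hp
  rw [Subgraph.edgeSet_sup, Set.ncard_union_eq ?_,
    (Walk.IsTrail.mk hedges).ncard_edgeSet_toSubgraph]
  exact Set.disjoint_right.mpr fun e he => hnew e (p.mem_edges_toSubgraph.mp he)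

lemma connected_sup (hp : G.IsEar H p) (hH : H.Connected) : (H ⊔ p.toSubgraph).Connected :=
  Subgraph.connected_sup hH.preconnected p.toSubgraph_connected.preconnected
    ⟨a, hp.1, p.start_mem_verts_toSubgraph⟩

/-- A closed ear is itself a cycle; an open one closes a cycle with a path of `H` back from
its end to its start. -/
lemma not_isBridge (hp : G.IsEar H p) (hH : H.Connected) {e : Sym2 V} (he : e ∈ p.edges) :
    ¬ G.IsBridge e := by
  classical
  intro hbr
  have hnil := hp.not_nil
  obtain ⟨ha, hb, hlen, hedges, htail, -, hinner, hnew⟩ := hp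
  obtain rfl | - := eq_or_ne a b
  · refine hbr.notMem_edges_of_isCycle ((Walk.isCycle_def p).mpr ⟨⟨hedges⟩, ?_, htail⟩) he
    rintro rfl
    exact hnil Walk.Nil.nil
  obtain ⟨q, hq, hqH⟩ := hH.exists_isPath_toSubgraph_le hb ha
  have hqverts : ∀ v ∈ q.support, v ∈ H.verts := fun v hv =>
    hqH.1 (q.mem_verts_toSubgraph.mpr hv)
  have hqedges : ∀ e ∈ q.edges, e ∈ H.edgeSet := fun e he =>
    Subgraph.edgeSet_mono hqH (q.mem_edges_toSubgraph.mpr he)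
  refine hbr.notMem_edges_of_isCycle (p := p.append q)
    ((Walk.isCycle_def _).mpr ⟨⟨?_⟩, ?_, ?_⟩) (by simp [he])
  · rw [Walk.edges_append]
    exact hedges.append hq.edges_nodup fun x hx hx' => hnew x hx (hqedges x hx')
  · intro h
    have := congrArg Walk.length h
    simp only [Walk.length_append, Walk.length_nil] at this
    omega
  · rw [Walk.tail_support_append]
    refine htail.append hq.support_nodup.tail fun x hx hx' => ?_
    rw [p.support_tail_eq_dropLast_append hnil, List.mem_append, List.mem_singleton] at hx
    rcases hx with hx | rfl
    · exact hinner x hx (hqverts x (List.mem_of_mem_tail hx'))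
    · have hqnodup := hq.support_nodup
      rw [← q.cons_tail_support] at hqnodup
      exact (List.nodup_cons.mp hqnodup).1 hx'

end IsEar

namespace GEDFrom

variable {H : G.Subgraph} {t s e br f : ℕ}

theorem add_ncard_verts [Finite V] (h : G.GEDFrom ⊥ H t s e br f) :
    s + H.verts.ncard = H.edgeSet.ncard + br + t := by
  induction h with
  | nil => simp
  | cycle _ c hc hd ih =>
    have hdisj : Disjoint _ c.toSubgraph.verts := Set.disjoint_right.mpr fun v hv =>
      hd v (c.mem_verts_toSubgraph.mp hv)
    rw [Subgraph.verts_sup, Subgraph.edgeSet_sup, Set.ncard_union_eq hdisj,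
      Set.ncard_union_eq (Subgraph.disjoint_edgeSet_of_disjoint_verts hdisj),
      hc.ncard_verts_toSubgraph, hc.isTrail.ncard_edgeSet_toSubgraph]
    omega
  | ear _ p hp ih =>
    have hlen := Walk.not_nil_iff_lt_length.mp hp.not_nil
    rw [hp.ncard_verts_sup, hp.ncard_edgeSet_sup]
    omega
  | bridge _ hab _ ha hb ih =>
    rw [Subgraph.ncard_edgeSet_sup_subgraphOfAdj hab hb, Subgraph.verts_sup,
      subgraphOfAdj_verts, Set.union_insert, Set.insert_eq_of_mem (Set.mem_union_left _ ha),
      Set.union_singleton, Set.ncard_insert_of_notMem hb]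
    omega
  | bridgeBase _ hab _ ha hb ih =>
    rw [Subgraph.ncard_edgeSet_sup_subgraphOfAdj hab hb, Subgraph.verts_sup,
      subgraphOfAdj_verts, Set.union_insert, Set.union_singleton,
      Set.ncard_insert_of_notMem (by simp [ha, hab.ne]), Set.ncard_insert_of_notMem hb]
    omega

theorem eq_bot_of_base_eq_zero (h : G.GEDFrom ⊥ H t s e br f) (ht : t = 0) : H = ⊥ := by
  induction h with
  | nil => rfl
  | cycle | bridgeBase => omega
  | ear _ _ hp ih => simpa [ih ht] using hp.1
  | bridge _ _ _ ha _ ih => simp [ih ht] at ha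

theorem connected_of_base_eq_one (h : G.GEDFrom ⊥ H t s e br f) (ht : t = 1) :
    H.Connected := by
  induction h with
  | nil => omega
  | cycle h c _ _ =>
    rw [h.eq_bot_of_base_eq_zero (by omega), bot_sup_eq]
    exact c.toSubgraph_connected
  | ear _ _ hp ih => exact hp.connected_sup (ih ht)
  | bridge _ hab _ ha _ ih =>
    exact Subgraph.connected_sup (ih ht).preconnected
      (Subgraph.subgraphOfAdj_connected hab).preconnected ⟨_, ha, by simp⟩
  | bridgeBase h hab =>
    rw [h.eq_bot_of_base_eq_zero (by omega), bot_sup_eq]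
    exact Subgraph.subgraphOfAdj_connected hab

theorem connected_of_mem_verts (h : G.GEDFrom ⊥ H t s e br f) (ht : t ≤ 1) {v : V}
    (hv : v ∈ H.verts) : H.Connected := by
  obtain rfl | rfl := Nat.le_one_iff_eq_zero_or_eq_one.mp ht
  · simp [h.eq_bot_of_base_eq_zero rfl] at hv
  · exact h.connected_of_base_eq_one rfl

theorem ncard_bridges [Finite V] (h : G.GEDFrom ⊥ H t s e br f) (ht : t ≤ 1) :
    (H.edgeSet ∩ {e | G.IsBridge e}).ncard = br := by
  induction h with
  | nil => simp
  | cycle _ c hc _ ih =>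
    rw [Subgraph.edgeSet_sup_inter_of_disjoint, ih (by omega)]
    exact Set.disjoint_left.mpr fun e he hbr =>
      hbr.notMem_edges_of_isCycle hc (c.mem_edges_toSubgraph.mp he)
  | ear h p hp ih =>
    rw [Subgraph.edgeSet_sup_inter_of_disjoint, ih ht]
    exact Set.disjoint_left.mpr fun e he =>
      hp.not_isBridge (h.connected_of_mem_verts ht hp.1) (p.mem_edges_toSubgraph.mp he)
  | bridge _ hab hbr _ hb ih =>
    rw [Subgraph.ncard_edgeSet_sup_subgraphOfAdj_inter hab hb (B := {e | G.IsBridge e}) hbr,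
      ih ht]
  | bridgeBase _ hab hbr _ hb ih =>
    rw [Subgraph.ncard_edgeSet_sup_subgraphOfAdj_inter hab hb (B := {e | G.IsBridge e}) hbr,
      ih (by omega)]

end GEDFrom

end SimpleGraph

/-- any generalized ear decomposition of a connected graph `G` has exactly
`|E(G)| - |V(G)| + ψ(G) + 1` pieces (stated additively in `ℕ`); in particular this number
is independent of the decomposition. -/
theorem stmt3 [Fintype V] (G : SimpleGraph V) (hG : G.Connected)
    (s e br f : ℕ) (h : G.GED ⊤ 1 s e br f) :
    s + Fintype.card V = G.edgeSet.ncard + psi G + 1 := by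
  have hcount := GEDFrom.add_ncard_verts h
  have hbridges := GEDFrom.ncard_bridges h le_rfl
  rw [Subgraph.edgeSet_top, Set.inter_eq_right.mpr hG.setOf_isBridge_subset_edgeSet] at hbridges
  rw [Subgraph.verts_top, Subgraph.edgeSet_top, Set.ncard_univ, Nat.card_eq_fintype_card]
    at hcount
  rw [psi, hbridges, hcount]
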